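/- arXiv:2007.05656 — 2 statements merged into one kernel-verified Lean document; each statement's English description precedes it below -/
import Mathlib

section
/- Let n ≥ 5 and x ∈ [0,1]^n. There exists a set T ⊆ {1,…,n−1} satisfying all of the following: (P1) T ∩ (T+1) = ∅ (indices cyclic modulo n−1); (P2) φ(T) = Φ*; (P3) 1 ≤ x_i + x_{i+1} + x_n ≤ 2 for all i ∈ T; (P4) for every i ∈ {1,…,n−1} with 1 ≤ x_i + x_{i+1} + x_n ≤ 2 we have {i−1, i, i+1} ∩ T ≠ ∅ (indices cyclic modulo n−1). -/
open Finset

/-- Cyclic successor on the rim `{1, …, n-1}` of the wheel `W_{n-1}`. -/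
def wsucc (n i : ℕ) : ℕ := if i = n - 1 then 1 else i + 1

/-- The dual bound `φ(T)`. -/
noncomputable def phiW (n : ℕ) (x : ℕ → ℝ) (T : Finset ℕ) : ℝ :=
  ∑ i ∈ Finset.Icc 1 (n - 1) \ T, max 0 (x i + x (wsucc n i) - 1) +
  ∑ i ∈ Finset.Icc 1 (n - 1) \ (T ∪ T.image (wsucc n)), max 0 (x i + x n - 1) +
  ∑ i ∈ T, max 0 (x i + x (wsucc n i) + x n - 1)

/-- `Φ* = max{φ(T) : T ⊆ {1,…,n-1}, T ∩ (T+1) = ∅}`. -/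
noncomputable def phiStarW (n : ℕ) (x : ℕ → ℝ) : ℝ :=
  ((Finset.Icc 1 (n - 1)).powerset.filter
      (fun T => T ∩ T.image (wsucc n) = ∅)).sup'
    ⟨∅, by simp⟩ (phiW n x)

/-- Cyclic predecessor on the rim `{1, …, n-1}` of the wheel `W_{n-1}`. -/
def wpred (n i : ℕ) : ℕ := if i = 1 then n - 1 else i - 1

/-!
Moving `i` into or out of `T` changes `φ` by the `triangleGain` of the weights
`x i, x (i+1), x n`: it is negative when their sum exceeds `2`, zero when the sum is below `1`,
and nonnegative otherwise. Hence no optimal `T` contains a triangle of weight `> 2`. Among the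
optimal sets pick one maximizing the number of its triangles of weight `≥ 1` minus the number of
those of weight `< 1`: dropping a triangle of weight `< 1`, or adding a free one of weight in
`[1, 2]`, would keep it optimal and raise this score.
-/

section Rim

variable {n i : ℕ} {T : Finset ℕ}

lemma wsucc_mem_Icc (hi : i ∈ Icc 1 (n - 1)) : wsucc n i ∈ Icc 1 (n - 1) := by
  unfold wsucc; rw [mem_Icc] at hi ⊢; split_ifs <;> omega

lemma wsucc_ne_self (hn : 3 ≤ n) : wsucc n i ≠ i := by
  unfold wsucc; split_ifs <;> omega

lemma wsucc_wpred (hi : i ∈ Icc 1 (n - 1)) : wsucc n (wpred n i) = i := by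
  unfold wsucc wpred; rw [mem_Icc] at hi; split_ifs <;> omega

lemma wpred_wsucc (hi : i ∈ Icc 1 (n - 1)) : wpred n (wsucc n i) = i := by
  unfold wsucc wpred; rw [mem_Icc] at hi; split_ifs <;> omega

lemma mem_image_wsucc_iff (hT : T ⊆ Icc 1 (n - 1)) (hi : i ∈ Icc 1 (n - 1)) :
    i ∈ T.image (wsucc n) ↔ wpred n i ∈ T := by
  refine ⟨fun h => ?_, fun h => mem_image.2 ⟨wpred n i, h, wsucc_wpred hi⟩⟩
  obtain ⟨j, hj, rfl⟩ := mem_image.1 h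
  rwa [wpred_wsucc (hT hj)]

end Rim

section Independence

variable {n i : ℕ} {T : Finset ℕ}

def rimIndepSets (n : ℕ) : Finset (Finset ℕ) :=
  (Icc 1 (n - 1)).powerset.filter (fun T => T ∩ T.image (wsucc n) = ∅)

lemma mem_rimIndepSets :
    T ∈ rimIndepSets n ↔ T ⊆ Icc 1 (n - 1) ∧ T ∩ T.image (wsucc n) = ∅ := by
  rw [rimIndepSets, mem_filter, mem_powerset]

lemma wsucc_notMem_of_mem (hT : T ∈ rimIndepSets n) (hi : i ∈ T) : wsucc n i ∉ T := by
  intro h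
  have : wsucc n i ∈ T ∩ T.image (wsucc n) := mem_inter.2 ⟨h, mem_image_of_mem _ hi⟩
  simp [(mem_rimIndepSets.1 hT).2] at this

lemma wpred_notMem_of_mem (hT : T ∈ rimIndepSets n) (hi : i ∈ T) : wpred n i ∉ T := by
  intro h
  have := wsucc_notMem_of_mem hT h
  rw [wsucc_wpred ((mem_rimIndepSets.1 hT).1 hi)] at this
  exact this hi

lemma erase_mem_rimIndepSets (hT : T ∈ rimIndepSets n) : T.erase i ∈ rimIndepSets n := by
  obtain ⟨hsub, hind⟩ := mem_rimIndepSets.1 hT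
  refine mem_rimIndepSets.2 ⟨(erase_subset _ _).trans hsub, subset_empty.1 ?_⟩
  exact hind ▸ inter_subset_inter (erase_subset _ _) (image_subset_image (erase_subset _ _))

lemma insert_mem_rimIndepSets (hn : 3 ≤ n) (hT : T ∈ rimIndepSets n) (hi : i ∈ Icc 1 (n - 1))
    (hsucc : wsucc n i ∉ T) (hpred : wpred n i ∉ T) : insert i T ∈ rimIndepSets n := by
  obtain ⟨hsub, hind⟩ := mem_rimIndepSets.1 hT
  refine mem_rimIndepSets.2 ⟨insert_subset hi hsub, eq_empty_iff_forall_notMem.2 ?_⟩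
  intro j hj
  rw [image_insert, mem_inter, mem_insert, mem_insert] at hj
  obtain ⟨rfl | hjT, hji | hjimg⟩ := hj
  · exact wsucc_ne_self hn hji.symm
  · exact hpred ((mem_image_wsucc_iff hsub hi).1 hjimg)
  · exact hsucc (hji ▸ hjT)
  · simpa [hind] using mem_inter.2 ⟨hjT, hjimg⟩

end Independence

/-- Adding `i` to `T` trades the edge terms of `{i, i+1}`, `{i, n}`, `{i+1, n}` in `φ` for the
triangle term of `{i, i+1, n}`; this is the resulting change, for weights `a, b, c`. -/
def triangleGain (a b c : ℝ) : ℝ :=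
  max 0 (a + b + c - 1) - (max 0 (a + b - 1) + max 0 (a + c - 1) + max 0 (b + c - 1))

lemma phiW_insert {n i : ℕ} (x : ℕ → ℝ) {T : Finset ℕ} (hn : 3 ≤ n) (hT : T ⊆ Icc 1 (n - 1))
    (hi : i ∈ Icc 1 (n - 1)) (hiT : i ∉ T) (hsucc : wsucc n i ∉ T) (hpred : wpred n i ∉ T) :
    phiW n x (insert i T) = phiW n x T + triangleGain (x i) (x (wsucc n i)) (x n) := by
  have hunion : insert i T ∪ (insert i T).image (wsucc n)
      = insert i (insert (wsucc n i) (T ∪ T.image (wsucc n))) := by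
    rw [image_insert]; ext j; simp only [mem_union, mem_insert]; tauto
  have hi_img : i ∉ T.image (wsucc n) := by rwa [mem_image_wsucc_iff hT hi]
  have hsucc_img : wsucc n i ∉ T.image (wsucc n) := by
    rwa [mem_image_wsucc_iff hT (wsucc_mem_Icc hi), wpred_wsucc hi]
  have hsucc_mem : wsucc n i ∈ Icc 1 (n - 1) \ (T ∪ T.image (wsucc n)) :=
    mem_sdiff.2 ⟨wsucc_mem_Icc hi, by simp [hsucc, hsucc_img]⟩
  have hi_mem : i ∈ (Icc 1 (n - 1) \ (T ∪ T.image (wsucc n))).erase (wsucc n i) :=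
    mem_erase.2 ⟨(wsucc_ne_self hn).symm, mem_sdiff.2 ⟨hi, by simp [hiT, hi_img]⟩⟩
  unfold phiW triangleGain
  rw [sdiff_insert, hunion, sdiff_insert, sdiff_insert, sum_insert hiT,
    sum_erase_eq_sub (mem_sdiff.2 ⟨hi, hiT⟩), sum_erase_eq_sub hi_mem, sum_erase_eq_sub hsucc_mem]
  ring

lemma triangleGain_nonneg {a b c : ℝ} (ha : 0 ≤ a) (hb : 0 ≤ b) (hc : 0 ≤ c)
    (ha1 : a ≤ 1) (hb1 : b ≤ 1) (hc1 : c ≤ 1) (hs : a + b + c ≤ 2) : 0 ≤ triangleGain a b c := by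
  unfold triangleGain
  rcases max_cases 0 (a + b - 1) with ⟨_, _⟩ | ⟨_, _⟩ <;>
  rcases max_cases 0 (a + c - 1) with ⟨_, _⟩ | ⟨_, _⟩ <;>
  rcases max_cases 0 (b + c - 1) with ⟨_, _⟩ | ⟨_, _⟩ <;>
  rcases max_cases 0 (a + b + c - 1) with ⟨_, _⟩ | ⟨_, _⟩ <;>
  linarith

lemma triangleGain_neg {a b c : ℝ} (hs : 2 < a + b + c) : triangleGain a b c < 0 := by
  unfold triangleGain
  rw [max_eq_right (by linarith)]
  linarith [le_max_right 0 (a + b - 1), le_max_right 0 (a + c - 1), le_max_right 0 (b + c - 1)]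

lemma triangleGain_eq_zero {a b c : ℝ} (ha : 0 ≤ a) (hb : 0 ≤ b) (hc : 0 ≤ c)
    (hs : a + b + c < 1) : triangleGain a b c = 0 := by
  unfold triangleGain
  rw [max_eq_left (by linarith), max_eq_left (by linarith), max_eq_left (by linarith),
    max_eq_left (by linarith)]
  ring

section Optimal

variable {n i : ℕ} {x : ℕ → ℝ} {T : Finset ℕ}

lemma phiW_le_phiStarW (hT : T ∈ rimIndepSets n) : phiW n x T ≤ phiStarW n x :=
  le_sup' (phiW n x) hT

noncomputable def optimalSets (n : ℕ) (x : ℕ → ℝ) : Finset (Finset ℕ) :=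
  (rimIndepSets n).filter (fun T => phiW n x T = phiStarW n x)

lemma mem_optimalSets :
    T ∈ optimalSets n x ↔ T ∈ rimIndepSets n ∧ phiW n x T = phiStarW n x :=
  mem_filter

lemma optimalSets_nonempty : (optimalSets n x).Nonempty := by
  have hempty : ∅ ∈ rimIndepSets n := mem_rimIndepSets.2 ⟨empty_subset _, empty_inter _⟩
  obtain ⟨T, hT, hmax⟩ := exists_mem_eq_sup' ⟨∅, hempty⟩ (phiW n x)
  exact ⟨T, mem_optimalSets.2 ⟨hT, hmax.symm⟩⟩

lemma phiW_eq_phiW_erase_add (hn : 3 ≤ n) (hT : T ∈ rimIndepSets n) (hi : i ∈ T) :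
    phiW n x T = phiW n x (T.erase i) + triangleGain (x i) (x (wsucc n i)) (x n) := by
  have hsub := (mem_rimIndepSets.1 hT).1
  have := phiW_insert x hn ((erase_subset i T).trans hsub) (hsub hi) (notMem_erase i T)
    (fun h => wsucc_notMem_of_mem hT hi (mem_of_mem_erase h))
    (fun h => wpred_notMem_of_mem hT hi (mem_of_mem_erase h))
  rwa [insert_erase hi] at this

lemma le_two_of_mem_optimalSets (hn : 3 ≤ n) (hT : T ∈ optimalSets n x) (hi : i ∈ T) :
    x i + x (wsucc n i) + x n ≤ 2 := by
  obtain ⟨hT, hopt⟩ := mem_optimalSets.1 hT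
  by_contra! hs
  have := phiW_le_phiStarW (x := x) (erase_mem_rimIndepSets (i := i) hT)
  rw [phiW_eq_phiW_erase_add hn hT hi] at hopt
  linarith [triangleGain_neg hs]

lemma erase_mem_optimalSets (hn : 3 ≤ n) (hx : ∀ j ∈ Icc 1 n, 0 ≤ x j)
    (hT : T ∈ optimalSets n x) (hi : i ∈ T) (hs : x i + x (wsucc n i) + x n < 1) :
    T.erase i ∈ optimalSets n x := by
  obtain ⟨hT, hopt⟩ := mem_optimalSets.1 hT
  have hiI := (mem_rimIndepSets.1 hT).1 hi
  have hrim : Icc 1 (n - 1) ⊆ Icc 1 n := Icc_subset_Icc_right (Nat.sub_le n 1)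
  have hgain := triangleGain_eq_zero (hx _ (hrim hiI)) (hx _ (hrim (wsucc_mem_Icc hiI)))
    (hx n (right_mem_Icc.2 (by omega))) hs
  rw [phiW_eq_phiW_erase_add hn hT hi, hgain, add_zero] at hopt
  exact mem_optimalSets.2 ⟨erase_mem_rimIndepSets hT, hopt⟩

lemma insert_mem_optimalSets (hn : 3 ≤ n) (hx : ∀ j ∈ Icc 1 n, 0 ≤ x j ∧ x j ≤ 1)
    (hT : T ∈ optimalSets n x) (hi : i ∈ Icc 1 (n - 1)) (hiT : i ∉ T) (hsucc : wsucc n i ∉ T)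
    (hpred : wpred n i ∉ T) (hs : x i + x (wsucc n i) + x n ≤ 2) :
    insert i T ∈ optimalSets n x := by
  obtain ⟨hT, hopt⟩ := mem_optimalSets.1 hT
  have hrim : Icc 1 (n - 1) ⊆ Icc 1 n := Icc_subset_Icc_right (Nat.sub_le n 1)
  obtain ⟨ha, ha1⟩ := hx i (hrim hi)
  obtain ⟨hb, hb1⟩ := hx _ (hrim (wsucc_mem_Icc hi))
  obtain ⟨hc, hc1⟩ := hx n (right_mem_Icc.2 (by omega))
  have hins := insert_mem_rimIndepSets hn hT hi hsucc hpred
  refine mem_optimalSets.2 ⟨hins, le_antisymm (phiW_le_phiStarW hins) ?_⟩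
  rw [phiW_insert x hn (mem_rimIndepSets.1 hT).1 hi hiT hsucc hpred, ← hopt]
  linarith [triangleGain_nonneg ha hb hc ha1 hb1 hc1 hs]

end Optimal

theorem exists_good_optimal_T (n : ℕ) (hn : 5 ≤ n) (x : ℕ → ℝ)
    (hx : ∀ i ∈ Finset.Icc 1 n, 0 ≤ x i ∧ x i ≤ 1) :
    ∃ T : Finset ℕ, T ⊆ Finset.Icc 1 (n - 1) ∧
      T ∩ T.image (wsucc n) = ∅ ∧
      phiW n x T = phiStarW n x ∧
      (∀ i ∈ T, 1 ≤ x i + x (wsucc n i) + x n ∧ x i + x (wsucc n i) + x n ≤ 2) ∧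
      (∀ i ∈ Finset.Icc 1 (n - 1),
        1 ≤ x i + x (wsucc n i) + x n → x i + x (wsucc n i) + x n ≤ 2 →
          (wpred n i ∈ T ∨ i ∈ T ∨ wsucc n i ∈ T)) := by
  have hn3 : 3 ≤ n := by omega
  let score : Finset ℕ → ℤ := fun T => ∑ i ∈ T, if 1 ≤ x i + x (wsucc n i) + x n then 1 else -1
  obtain ⟨T, hT, hmax⟩ := exists_max_image (optimalSets n x) score optimalSets_nonempty
  obtain ⟨hTind, hopt⟩ := mem_optimalSets.1 hT
  refine ⟨T, (mem_rimIndepSets.1 hTind).1, (mem_rimIndepSets.1 hTind).2, hopt,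
    fun i hi => ⟨?_, le_two_of_mem_optimalSets hn3 hT hi⟩, ?_⟩
  · by_contra! hs
    have := hmax _ (erase_mem_optimalSets hn3 (fun j hj => (hx j hj).1) hT hi hs)
    simp only [score] at this
    rw [sum_erase_eq_sub hi, if_neg hs.not_ge] at this
    linarith
  · intro i hi hs1 hs2
    by_contra! hnot
    obtain ⟨hpred, hiT, hsucc⟩ := hnot
    have := hmax _ (insert_mem_optimalSets hn3 hx hT hi hiT hsucc hpred hs2)
    simp only [score] at this
    rw [sum_insert hiT, if_pos hs1] at this
    linarith
end

section
/- Let n ≥ 5 with n−1 even, let x ∈ [0,1]^n, and let T* ⊆ {1,…,n−1} satisfy properties (P1)–(P4). Then the following system of linear inequalities has a solution z = (z_1,…,z_{n−1}) ∈ ℝ^{n−1}: z_i ≥ m_i for i ∈ T* ∪ (T*+1); z_i ≥ M_i for i ∈ {1,…,n−1} ∖ (T* ∪ (T*+1)); z_i ≤ M_i for all i ∈ {1,…,n−1}; z_i + z_{i+1} ≥ M'_i for i ∈ T*; and m'_i ≤ z_i + z_{i+1} ≤ M'_i for i ∈ {1,…,n−1} ∖ T* (index i+1 modulo n−1). -/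
/-
Writing `z i = M i - δ i`, it suffices to find `δ ≥ 0` vanishing off `T ∪ (T + 1)`, with
`δ i ≤ max 0 (w i)`, `δ i + δ (i + 1) ≤ w i` on `T` and `δ i + δ (i + 1) = max 0 (w i)` off `T`,
where `w i = M i + M (i + 1) - M' i` is the excess of the triangle on the rim edge `{i, i + 1}`.
Since `φ(U)` is a constant plus `∑ i ∈ U, w i` plus nonnegative terms that vanish on `T` by (P3),
(P2) says that `T` is a maximum-weight independent set of the rim cycle for the weights `w`.
On `T`, `δ` is given by a Lindley-type recursion along the runs `j, j + 2, j + 4, …` of `T`; each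
inequality needed of its closed form comes from an exchange argument against the optimality of
`T`, swapping the points of a run for the positive gaps between them. The rim having even length
matters when `T` is a whole parity class, so that the run closes up.
-/

open Finset

noncomputable def mW (n : ℕ) (x : ℕ → ℝ) (i : ℕ) : ℝ := max 0 (x i - x n)

noncomputable def MW (n : ℕ) (x : ℕ → ℝ) (i : ℕ) : ℝ := min (x i) (1 - x n)

noncomputable def m'W (n : ℕ) (x : ℕ → ℝ) (i : ℕ) : ℝ := min 1 (x i + x (wsucc n i)) - x n

noncomputable def M'W (n : ℕ) (x : ℕ → ℝ) (i : ℕ) : ℝ := max 1 (x i + x (wsucc n i)) - x n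

/-- The system of linear inequalities (1)–(6) for the vector `z`. -/
def zSystem (n : ℕ) (x : ℕ → ℝ) (T : Finset ℕ) (z : ℕ → ℝ) : Prop :=
  (∀ i ∈ T ∪ T.image (wsucc n), mW n x i ≤ z i) ∧
  (∀ i ∈ Finset.Icc 1 (n - 1) \ (T ∪ T.image (wsucc n)), MW n x i ≤ z i) ∧
  (∀ i ∈ Finset.Icc 1 (n - 1), z i ≤ MW n x i) ∧
  (∀ i ∈ T, M'W n x i ≤ z i + z (wsucc n i)) ∧
  (∀ i ∈ Finset.Icc 1 (n - 1) \ T,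
      m'W n x i ≤ z i + z (wsucc n i) ∧ z i + z (wsucc n i) ≤ M'W n x i)

section CycleSlack

variable {N : ℕ} {w : ZMod N → ℝ} {T : Finset (ZMod N)} {K : ℕ}

theorem ZMod.eq_of_two_mul_natCast_eq (hN : N = 2 * K) {s t : ℕ} (hs : s < K) (ht : t < K)
    (h : (2 * s : ZMod N) = 2 * t) : s = t := by
  have h' : ((2 * s : ℕ) : ZMod N) = ((2 * t : ℕ) : ZMod N) := by push_cast; exact h
  rw [ZMod.natCast_eq_natCast_iff', Nat.mod_eq_of_lt (by omega), Nat.mod_eq_of_lt (by omega)] at h'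
  omega

theorem ZMod.two_mul_natCast_add_one_ne (hN : N = 2 * K) (s t : ℕ) :
    (2 * s + 1 : ZMod N) ≠ 2 * t := by
  intro h
  have h2 := congrArg (ZMod.castHom (show 2 ∣ N from ⟨K, hN⟩) (ZMod 2)) h
  simp only [map_add, map_mul, map_natCast, map_one, map_ofNat] at h2
  rw [show (2 : ZMod 2) = 0 from rfl] at h2
  simp at h2

theorem ZMod.two_mul_natCast_eq_zero (hN : N = 2 * K) : (2 * K : ZMod N) = 0 := by
  rw [show (2 * K : ZMod N) = ((2 * K : ℕ) : ZMod N) by push_cast; rfl, ← hN, ZMod.natCast_self]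

def CycleIndep (U : Finset (ZMod N)) : Prop := ∀ i ∈ U, i + 1 ∉ U

variable (w T) in
structure IsMaxWeightIndep : Prop where
  indep : CycleIndep T
  sum_le : ∀ U, CycleIndep U → ∑ i ∈ U, w i ≤ ∑ i ∈ T, w i

namespace IsMaxWeightIndep

theorem sum_le_of_exchange (hT : IsMaxWeightIndep w T) {G P : Finset (ZMod N)}
    (hPT : P ⊆ T) (hG : CycleIndep G) (hGT : Disjoint G T)
    (hpred : ∀ g ∈ G, g - 1 ∈ T → g - 1 ∈ P) (hsucc : ∀ g ∈ G, g + 1 ∈ T → g + 1 ∈ P) :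
    ∑ i ∈ G, w i ≤ ∑ i ∈ P, w i := by
  have hU : CycleIndep (T \ P ∪ G) := by
    intro i hi hi1
    simp only [mem_union, mem_sdiff] at hi hi1
    rcases hi with ⟨hiT, hiP⟩ | hiG <;> rcases hi1 with ⟨hi1T, hi1P⟩ | hi1G
    · exact hT.indep i hiT hi1T
    · exact hiP (by simpa using hpred _ hi1G (by simpa using hiT))
    · exact hi1P (hsucc i hiG hi1T)
    · exact hG i hiG hi1G
  have h := hT.sum_le _ hU
  rw [sum_union (disjoint_of_subset_left sdiff_subset hGT.symm), ← sum_sdiff hPT] at h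
  linarith

theorem nonneg (hT : IsMaxWeightIndep w T) {j : ZMod N} (hj : j ∈ T) : 0 ≤ w j := by
  simpa using hT.sum_le_of_exchange (G := ∅) (P := {j}) (by simpa) (by simp [CycleIndep])
    (by simp) (by simp) (by simp)

theorem nonpos_of_isolated [Nontrivial (ZMod N)] (hT : IsMaxWeightIndep w T) {i : ZMod N}
    (hp : i - 1 ∉ T) (hi : i ∉ T) (hs : i + 1 ∉ T) : w i ≤ 0 := by
  simpa using hT.sum_le_of_exchange (G := {i}) (P := ∅) (by simp) (by simp [CycleIndep])
    (by simpa using hi) (by simpa using hp) (by simpa using hs)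

/-- Exchange the points `a, a - 2, …, a - 2 * m` of `T` for the positive gaps between them. -/
theorem sum_gap_le (hT : IsMaxWeightIndep w T) (hN : N = 2 * K) (a : ZMod N) {m : ℕ}
    (hm : m ≤ K) (hgap : ∀ s < m, a - 2 * s - 1 ∉ T) :
    ∑ s ∈ range m, max 0 (w (a - 2 * s - 1)) ≤
      ∑ i ∈ ((range (m + 1)).image fun s : ℕ => a - 2 * s).filter (· ∈ T), w i := by
  have hG : ∑ i ∈ ((range m).image fun s : ℕ => a - 2 * s - 1).filter (0 < w ·), w i =
      ∑ s ∈ range m, max 0 (w (a - 2 * s - 1)) := by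
    rw [sum_filter, sum_image]
    · refine sum_congr rfl fun s _ => ?_
      split_ifs with h
      · exact (max_eq_right h.le).symm
      · exact (max_eq_left (not_lt.1 h)).symm
    · intro s hs t ht hst
      simp only [coe_range, Set.mem_Iio] at hs ht
      exact ZMod.eq_of_two_mul_natCast_eq hN (by omega) (by omega) (by linear_combination -hst)
  rw [← hG]
  refine hT.sum_le_of_exchange (fun i hi => (mem_filter.1 hi).2) ?_ ?_ ?_ ?_
  · intro g hg hg1
    obtain ⟨s, -, rfl⟩ := mem_image.1 (mem_filter.1 hg).1
    obtain ⟨t, -, ht⟩ := mem_image.1 (mem_filter.1 hg1).1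
    exact ZMod.two_mul_natCast_add_one_ne hN t s (by linear_combination -ht)
  · refine disjoint_left.2 fun g hg => ?_
    obtain ⟨s, hs, rfl⟩ := mem_image.1 (mem_filter.1 hg).1
    exact hgap s (mem_range.1 hs)
  · intro g hg hgT
    obtain ⟨s, hs, rfl⟩ := mem_image.1 (mem_filter.1 hg).1
    refine mem_filter.2 ⟨mem_image.2 ⟨s + 1, by simpa using hs, by push_cast; ring⟩, hgT⟩
  · intro g hg hgT
    obtain ⟨s, hs, rfl⟩ := mem_image.1 (mem_filter.1 hg).1
    refine mem_filter.2 ⟨mem_image.2 ⟨s, by simp at hs ⊢; omega, by ring⟩, hgT⟩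

theorem sum_filter_image_le (hT : IsMaxWeightIndep w T) {ι : Type*} (S : Finset ι)
    (f : ι → ZMod N) :
    ∑ i ∈ (S.image f).filter (· ∈ T), w i ≤ ∑ s ∈ S, (T : Set (ZMod N)).indicator w (f s) := by
  rw [filter_image]
  refine (sum_image_le_of_nonneg fun i hi => ?_).trans_eq ?_
  · obtain ⟨s, hs, rfl⟩ := mem_image.1 hi
    exact hT.nonneg (mem_filter.1 hs).2
  · rw [sum_filter]
    exact sum_congr rfl fun s _ => by simp [Set.indicator_apply]

end IsMaxWeightIndep

variable (w T) in
noncomputable def chainSum (j : ZMod N) (m : ℕ) : ℝ :=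
  ∑ s ∈ range m, (max 0 (w (j - 2 * s - 1)) - (T : Set (ZMod N)).indicator w (j - 2 * s - 2))

theorem chainSum_zero (j : ZMod N) : chainSum w T j 0 = 0 := sum_range_zero _

theorem chainSum_succ (j : ZMod N) (m : ℕ) :
    chainSum w T (j + 2) (m + 1) =
      max 0 (w (j + 1)) - (T : Set (ZMod N)).indicator w j + chainSum w T j m := by
  rw [chainSum, sum_range_succ', add_comm]
  congr 1
  · norm_num [add_sub_assoc]
  · exact sum_congr rfl fun s _ => by push_cast; ring_nf

namespace IsMaxWeightIndep

theorem chainSum_le (hT : IsMaxWeightIndep w T) (hN : N = 2 * K) (a : ZMod N) {m : ℕ}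
    (hm : m ≤ K) (hgap : ∀ s < m, a - 2 * s - 1 ∉ T) :
    chainSum w T a m ≤ (T : Set (ZMod N)).indicator w a := by
  have h := (hT.sum_gap_le hN a hm hgap).trans (hT.sum_filter_image_le _ _)
  rw [sum_range_succ'] at h
  have hpt : ∀ s : ℕ, a - 2 * ((s + 1 : ℕ) : ZMod N) = a - 2 * s - 2 := fun s => by
    push_cast; ring
  simp only [hpt, Nat.cast_zero, mul_zero, sub_zero] at h
  rw [chainSum, sum_sub_distrib]
  linarith

theorem chainSum_nonpos (hT : IsMaxWeightIndep w T) (hN : N = 2 * K) (hK : 0 < K) (a : ZMod N)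
    (hgap : ∀ s < K, a - 2 * s - 1 ∉ T) : chainSum w T a K ≤ 0 := by
  set f : ℕ → ℝ := fun s => (T : Set (ZMod N)).indicator w (a - 2 * s)
  have hK0 : a - 2 * (K : ZMod N) = a - 2 * ((0 : ℕ) : ZMod N) := by
    simp [ZMod.two_mul_natCast_eq_zero hN]
  have himg : (range (K + 1)).image (fun s : ℕ => a - 2 * s) =
      (range K).image (fun s : ℕ => a - 2 * s) := by
    rw [range_add_one, image_insert, insert_eq_of_mem (mem_image.2 ⟨0, mem_range.2 hK, hK0.symm⟩)]
  have h := hT.sum_gap_le hN a le_rfl hgap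
  rw [himg] at h
  have h' := h.trans (hT.sum_filter_image_le _ _)
  have hrot : ∑ s ∈ range K, f (s + 1) = ∑ s ∈ range K, f s := by
    have h1 := sum_range_succ' f K
    rw [sum_range_succ] at h1
    have : f K = f 0 := by simp only [f, hK0]
    linarith
  have hpt : ∀ s : ℕ, a - 2 * s - 2 = a - 2 * ((s + 1 : ℕ) : ZMod N) := fun s => by
    push_cast; ring
  simp only [chainSum, sum_sub_distrib, hpt]
  change _ - ∑ s ∈ range K, f (s + 1) ≤ 0
  rw [hrot]
  linarith

end IsMaxWeightIndep

variable (w T K) in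
/-- The closed form of the recursion `a (i + 2) = max 0 (a i + max 0 (w (i + 1)) - w i)` along the
run `…, j - 4, j - 2, j` of `T`, started with `a i = max 0 (w (i - 1))` where the run begins. -/
noncomputable def chainMax (j : ZMod N) : ℝ :=
  ((range (K + 1)).filter fun m : ℕ => ∀ s : ℕ, s < m → j - 2 * s ∈ T).sup'
    ⟨0, mem_filter.2 ⟨by simp, by simp⟩⟩ (chainSum w T j)

theorem chainSum_le_chainMax {j : ZMod N} {m : ℕ} (hm : m ≤ K) (hch : ∀ s < m, j - 2 * s ∈ T) :
    chainSum w T j m ≤ chainMax w T K j :=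
  le_sup' (chainSum w T j) (mem_filter.2 ⟨mem_range.2 (by omega), hch⟩)

theorem chainMax_nonneg (j : ZMod N) : 0 ≤ chainMax w T K j := by
  simpa [chainSum_zero] using chainSum_le_chainMax (w := w) (K := K) (j := j) (Nat.zero_le _)
    (by simp)

theorem chainMax_eq_zero {j : ZMod N} (hj : j ∉ T) : chainMax w T K j = 0 := by
  refine le_antisymm (sup'_le _ _ fun m hm => ?_) (chainMax_nonneg j)
  obtain ⟨-, hch⟩ := mem_filter.1 hm
  obtain rfl | hm0 := Nat.eq_zero_or_pos m
  · exact (chainSum_zero j).le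
  · exact absurd (by simpa using hch 0 hm0) hj

namespace IsMaxWeightIndep

theorem gap_notMem (hT : IsMaxWeightIndep w T) {j : ZMod N} {m : ℕ}
    (hch : ∀ s < m, j - 2 * s ∈ T) : ∀ s < m, j - 2 * s - 1 ∉ T :=
  fun s hs h => hT.indep _ h (by simpa using hch s hs)

theorem chainMax_le (hT : IsMaxWeightIndep w T) (hN : N = 2 * K) (j : ZMod N) :
    chainMax w T K j ≤ max 0 (w j) := by
  refine sup'_le _ _ fun m hm => ?_
  obtain ⟨hm, hch⟩ := mem_filter.1 hm
  refine (hT.chainSum_le hN j (by simpa [Nat.lt_succ_iff] using hm) (hT.gap_notMem hch)).trans ?_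
  rw [Set.indicator_apply]
  split_ifs <;> simp

theorem chainMax_add_one_le (hT : IsMaxWeightIndep w T) (hN : N = 2 * K) (j : ZMod N) :
    chainMax w T K (j + 1) ≤ max 0 (w j) := by
  refine sup'_le _ _ fun m hm => ?_
  obtain ⟨hm, hch⟩ := mem_filter.1 hm
  obtain _ | m := m
  · simp [chainSum_zero]
  rw [show j + 1 = j - 1 + 2 by ring, chainSum_succ, sub_add_cancel]
  have hgap : ∀ s < m, j - 1 - 2 * s - 1 ∉ T := hT.gap_notMem fun s hs => by
    convert hch (s + 1) (by omega) using 1; push_cast; ring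
  have := hT.chainSum_le hN (j - 1) (by simp at hm; omega) hgap
  linarith

theorem le_chainMax (hK : 0 < K) {j : ZMod N} (hj : j + 1 ∈ T) (hj' : j - 1 ∉ T) :
    max 0 (w j) ≤ chainMax w T K (j + 1) := by
  have h := chainSum_le_chainMax (w := w) (T := T) (j := j - 1 + 2) hK fun s hs => by
    rw [Nat.lt_one_iff.1 hs, Nat.cast_zero, mul_zero, sub_zero]
    convert hj using 1
    ring
  rwa [chainSum_succ, sub_add_cancel, chainSum_zero, Set.indicator_of_notMem (by simpa using hj'),
    sub_zero, add_zero, show j - 1 + 2 = j + 1 by ring] at h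

theorem chainMax_add_le (hT : IsMaxWeightIndep w T) (hN : N = 2 * K) (hK : 0 < K) {j : ZMod N}
    (hj : j ∈ T) (hj2 : j + 2 ∈ T) :
    chainMax w T K j + max 0 (w (j + 1)) - w j ≤ chainMax w T K (j + 2) := by
  have hstep : ∀ m < K, (∀ s < m, j - 2 * s ∈ T) →
      max 0 (w (j + 1)) - w j + chainSum w T j m ≤ chainMax w T K (j + 2) := by
    intro m hm hch
    rw [← Set.indicator_of_mem (s := (T : Set (ZMod N))) (a := j) (by simpa using hj) w,
      ← chainSum_succ]
    refine chainSum_le_chainMax hm fun s hs => ?_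
    obtain _ | s := s
    · simpa using hj2
    · convert hch s (by omega) using 1; push_cast; ring
  suffices chainMax w T K j ≤ chainMax w T K (j + 2) - max 0 (w (j + 1)) + w j by linarith
  refine sup'_le _ _ fun m hm => ?_
  obtain ⟨hm, hch⟩ := mem_filter.1 hm
  rcases (Nat.lt_succ_iff.1 (mem_range.1 hm)).lt_or_eq with hm | rfl
  · linarith [hstep m hm hch]
  · have := hT.chainSum_nonpos hN hK j (hT.gap_notMem hch)
    have := hstep 0 hK (by simp)
    rw [chainSum_zero] at this
    linarith

theorem chainMax_add_le_of_notMem (hT : IsMaxWeightIndep w T) (hN : N = 2 * K) (hK : 0 < K)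
    {j : ZMod N} (hj : j ∈ T) (hj2 : j + 2 ∉ T) :
    chainMax w T K j + max 0 (w (j + 1)) ≤ w j := by
  suffices chainMax w T K j ≤ w j - max 0 (w (j + 1)) by linarith
  refine sup'_le _ _ fun m hm => ?_
  obtain ⟨hm, hch⟩ := mem_filter.1 hm
  have hmK : m < K := by
    refine lt_of_le_of_ne (by simpa [Nat.lt_succ_iff] using hm) fun hmK => hj2 ?_
    convert hch (K - 1) (by omega) using 1
    rw [Nat.cast_sub (by omega), Nat.cast_one]
    linear_combination ZMod.two_mul_natCast_eq_zero hN
  have hgap : ∀ s < m + 1, j + 2 - 2 * s - 1 ∉ T := by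
    intro s hs
    obtain _ | s := s
    · simpa [add_sub_assoc, show (2 : ZMod N) - 1 = 1 by ring] using fun h => hT.indep j hj h
    · convert hT.gap_notMem hch s (by omega) using 2; push_cast; ring
  have h := hT.chainSum_le hN (j + 2) hmK hgap
  rw [chainSum_succ, Set.indicator_of_notMem (a := j + 2) (by simpa using hj2),
    Set.indicator_of_mem (a := j) (by simpa using hj)] at h
  linarith

end IsMaxWeightIndep

variable (w T K) in
noncomputable def slack (i : ZMod N) : ℝ :=
  if i ∈ T then chainMax w T K i
  else if i - 1 ∈ T then max 0 (w i) - chainMax w T K (i + 1) else 0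

theorem slack_eq_zero {i : ZMod N} (hi : i ∉ T) (hi' : i - 1 ∉ T) : slack w T K i = 0 := by
  simp [slack, hi, hi']

namespace IsMaxWeightIndep

theorem slack_nonneg (hT : IsMaxWeightIndep w T) (hN : N = 2 * K) (i : ZMod N) :
    0 ≤ slack w T K i := by
  unfold slack
  split_ifs
  · exact chainMax_nonneg i
  · exact sub_nonneg.2 (hT.chainMax_add_one_le hN i)
  · exact le_rfl

theorem slack_le (hT : IsMaxWeightIndep w T) (hN : N = 2 * K) (i : ZMod N) :
    slack w T K i ≤ max 0 (w i) := by
  unfold slack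
  split_ifs
  · exact hT.chainMax_le hN i
  · exact sub_le_self _ (chainMax_nonneg _)
  · exact le_max_left _ _

theorem slack_add_le (hT : IsMaxWeightIndep w T) (hN : N = 2 * K) (hK : 0 < K) {i : ZMod N}
    (hi : i ∈ T) : slack w T K i + slack w T K (i + 1) ≤ w i := by
  rw [slack, if_pos hi, slack, if_neg (hT.indep i hi), if_pos (by simpa using hi),
    show i + 1 + 1 = i + 2 by ring]
  by_cases hi2 : i + 2 ∈ T
  · linarith [hT.chainMax_add_le hN hK hi hi2]
  · rw [chainMax_eq_zero hi2]
    linarith [hT.chainMax_add_le_of_notMem hN hK hi hi2]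

theorem slack_add_eq (hT : IsMaxWeightIndep w T) (hN : N = 2 * K) (hK : 0 < K) {i : ZMod N}
    (hi : i ∉ T) : slack w T K i + slack w T K (i + 1) = max 0 (w i) := by
  have : Fact (1 < N) := ⟨by omega⟩
  have hs : slack w T K (i + 1) = chainMax w T K (i + 1) := by
    by_cases h : i + 1 ∈ T
    · simp [slack, h]
    · simp [slack, h, hi, chainMax_eq_zero h]
  rw [hs, slack, if_neg hi]
  split_ifs with hp
  · ring
  · by_cases h : i + 1 ∈ T
    · linarith [hT.chainMax_add_one_le hN i, le_chainMax (w := w) hK h hp]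
    · rw [chainMax_eq_zero h, max_eq_left (hT.nonpos_of_isolated hp hi h)]
      ring

end IsMaxWeightIndep

end CycleSlack

theorem natCast_injOn_Icc (N : ℕ) : Set.InjOn (Nat.cast : ℕ → ZMod N) (Icc 1 N) := by
  intro a ha b hb h
  simp only [coe_Icc, Set.mem_Icc] at ha hb
  have h' : ((a - 1 : ℕ) : ZMod N) = ((b - 1 : ℕ) : ZMod N) := by
    rw [Nat.cast_sub ha.1, Nat.cast_sub hb.1, h]
  rw [ZMod.natCast_eq_natCast_iff', Nat.mod_eq_of_lt (by omega), Nat.mod_eq_of_lt (by omega)] at h'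
  omega

def rimIndex {N : ℕ} (v : ZMod N) : ℕ := (v - 1).val + 1

theorem natCast_rimIndex {N : ℕ} [NeZero N] (v : ZMod N) : (rimIndex v : ZMod N) = v := by
  simp [rimIndex]

theorem rimIndex_mem {N : ℕ} [NeZero N] (v : ZMod N) : rimIndex v ∈ Icc 1 N := by
  have := ZMod.val_lt (v - 1)
  simp only [rimIndex, mem_Icc]
  omega

theorem rimIndex_natCast {N i : ℕ} [NeZero N] (hi : i ∈ Icc 1 N) : rimIndex (i : ZMod N) = i :=
  natCast_injOn_Icc N (rimIndex_mem _) hi (natCast_rimIndex _)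

theorem wsucc_mem {n i : ℕ} (hi : i ∈ Icc 1 (n - 1)) : wsucc n i ∈ Icc 1 (n - 1) := by
  simp only [mem_Icc] at hi ⊢
  unfold wsucc
  split_ifs <;> omega

theorem natCast_wsucc (n i : ℕ) : ((wsucc n i : ℕ) : ZMod (n - 1)) = i + 1 := by
  unfold wsucc
  split_ifs with h
  · simp [h]
  · push_cast
    rfl

theorem wsucc_injOn (n : ℕ) : Set.InjOn (wsucc n) (Icc 1 (n - 1)) := fun a ha b hb h =>
  natCast_injOn_Icc _ ha hb <| by
    simpa [natCast_wsucc] using congrArg (Nat.cast : ℕ → ZMod (n - 1)) h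

theorem isMaxWeightIndep_image {n : ℕ} [NeZero (n - 1)] {w : ℕ → ℝ} {T : Finset ℕ}
    (hT : T ⊆ Icc 1 (n - 1)) (hP1 : T ∩ T.image (wsucc n) = ∅)
    (hmax : ∀ U ⊆ Icc 1 (n - 1), U ∩ U.image (wsucc n) = ∅ → ∑ i ∈ U, w i ≤ ∑ i ∈ T, w i) :
    IsMaxWeightIndep (fun v : ZMod (n - 1) => w (rimIndex v)) (T.image Nat.cast) where
  indep v hv hv1 := by
    obtain ⟨i, hi, rfl⟩ := mem_image.1 hv
    obtain ⟨j, hj, hji⟩ := mem_image.1 hv1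
    have hj' : j = wsucc n i :=
      natCast_injOn_Icc _ (hT hj) (wsucc_mem (hT hi)) (by rw [hji, natCast_wsucc])
    have : j ∈ T ∩ T.image (wsucc n) := mem_inter.2 ⟨hj, hj' ▸ mem_image_of_mem _ hi⟩
    simp [hP1] at this
  sum_le U hU := by
    have hinj : Set.InjOn rimIndex (U : Set (ZMod (n - 1))) := fun a _ b _ h => by
      rw [← natCast_rimIndex a, h, natCast_rimIndex]
    have hUind : U.image rimIndex ∩ (U.image rimIndex).image (wsucc n) = ∅ := by
      refine eq_empty_of_forall_notMem fun i hi => ?_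
      obtain ⟨hi, hi'⟩ := mem_inter.1 hi
      obtain ⟨v, hv, rfl⟩ := mem_image.1 hi
      obtain ⟨u, hu, hvv'⟩ := mem_image.1 hi'
      obtain ⟨v', hv', rfl⟩ := mem_image.1 hu
      have := congrArg (Nat.cast : ℕ → ZMod (n - 1)) hvv'
      rw [natCast_wsucc, natCast_rimIndex, natCast_rimIndex] at this
      exact hU v' hv' (this ▸ hv)
    calc ∑ v ∈ U, w (rimIndex v) = ∑ i ∈ U.image rimIndex, w i := (sum_image hinj).symm
      _ ≤ ∑ i ∈ T, w i := hmax _ (image_subset_iff.2 fun v _ => rimIndex_mem v) hUind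
      _ = ∑ v ∈ T.image Nat.cast, w (rimIndex v) := by
        rw [sum_image ((natCast_injOn_Icc _).mono (coe_subset.2 hT))]
        exact sum_congr rfl fun i hi => by rw [rimIndex_natCast (hT hi)]

structure IsRimSlack (n : ℕ) (w : ℕ → ℝ) (T : Finset ℕ) (δ : ℕ → ℝ) : Prop where
  nonneg : ∀ i, 0 ≤ δ i
  eq_zero : ∀ i ∈ Icc 1 (n - 1) \ (T ∪ T.image (wsucc n)), δ i = 0
  le : ∀ i ∈ Icc 1 (n - 1), δ i ≤ max 0 (w i)
  add_le : ∀ i ∈ T, δ i + δ (wsucc n i) ≤ w i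
  add_eq : ∀ i ∈ Icc 1 (n - 1) \ T, δ i + δ (wsucc n i) = max 0 (w i)

theorem exists_isRimSlack {n K : ℕ} (hK : n - 1 = 2 * K) (hK0 : 0 < K) {w : ℕ → ℝ}
    {T : Finset ℕ} (hT : T ⊆ Icc 1 (n - 1)) (hP1 : T ∩ T.image (wsucc n) = ∅)
    (hmax : ∀ U ⊆ Icc 1 (n - 1), U ∩ U.image (wsucc n) = ∅ → ∑ i ∈ U, w i ≤ ∑ i ∈ T, w i) :
    ∃ δ : ℕ → ℝ, IsRimSlack n w T δ := by
  have : NeZero (n - 1) := ⟨by omega⟩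
  have hS := isMaxWeightIndep_image hT hP1 hmax
  have hmem : ∀ i ∈ Icc 1 (n - 1), (i : ZMod (n - 1)) ∈ T.image Nat.cast ↔ i ∈ T :=
    fun i hi => ⟨fun h => by
      obtain ⟨j, hj, hji⟩ := mem_image.1 h
      rwa [← natCast_injOn_Icc _ (hT hj) hi hji], mem_image_of_mem _⟩
  have hpred : ∀ i ∈ Icc 1 (n - 1),
      (i : ZMod (n - 1)) - 1 ∈ T.image Nat.cast ↔ i ∈ T.image (wsucc n) := by
    refine fun i hi => ⟨fun h => ?_, fun h => ?_⟩
    · obtain ⟨j, hj, hji⟩ := mem_image.1 h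
      refine mem_image.2 ⟨j, hj, natCast_injOn_Icc _ (wsucc_mem (hT hj)) hi ?_⟩
      rw [natCast_wsucc, hji, sub_add_cancel]
    · obtain ⟨j, hj, rfl⟩ := mem_image.1 h
      rw [natCast_wsucc, add_sub_cancel_right]
      exact mem_image_of_mem _ hj
  have hw : ∀ i ∈ Icc 1 (n - 1), w (rimIndex (i : ZMod (n - 1))) = w i :=
    fun i hi => by rw [rimIndex_natCast hi]
  refine ⟨fun i => slack (fun v => w (rimIndex v)) (T.image Nat.cast) K i,
    ⟨fun i => hS.slack_nonneg hK _, fun i hi => ?_, fun i hi => ?_, fun i hi => ?_,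
      fun i hi => ?_⟩⟩
  · simp only [mem_sdiff, mem_union, not_or] at hi
    exact slack_eq_zero ((hmem i hi.1).not.2 hi.2.1) ((hpred i hi.1).not.2 hi.2.2)
  · simpa [hw i hi] using hS.slack_le hK (i : ZMod (n - 1))
  · simpa [natCast_wsucc, hw i (hT hi)] using hS.slack_add_le hK hK0 ((hmem i (hT hi)).2 hi)
  · obtain ⟨hiI, hiT⟩ := mem_sdiff.1 hi
    simpa [natCast_wsucc, hw i hiI] using hS.slack_add_eq hK hK0 ((hmem i hiI).not.2 hiT)

theorem Finset.sum_sdiff_add_sum_sdiff_union_image {ι : Type*} [DecidableEq ι] {I U : Finset ι}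
    {σ : ι → ι} (hU : U ⊆ I) (hσU : U.image σ ⊆ I) (hσ : Set.InjOn σ U)
    (hdisj : Disjoint U (U.image σ)) (f g h : ι → ℝ) :
    ∑ i ∈ I \ U, f i + ∑ i ∈ I \ (U ∪ U.image σ), g i + ∑ i ∈ U, h i =
      ∑ i ∈ I, f i + ∑ i ∈ I, g i + ∑ i ∈ U, (h i - f i - g i - g (σ i)) := by
  rw [sum_sdiff_eq_sub hU, sum_sdiff_eq_sub (union_subset hU hσU), sum_union hdisj, sum_image hσ]
  simp only [sum_sub_distrib]
  ring

section Wheel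

variable {n : ℕ} {x : ℕ → ℝ}

variable (n x) in
noncomputable def triExcess (i : ℕ) : ℝ := MW n x i + MW n x (wsucc n i) - M'W n x i

theorem triExcess_eq (i : ℕ) :
    triExcess n x i = x i + x (wsucc n i) + x n - 1 - max 0 (x i + x (wsucc n i) - 1) -
      max 0 (x i + x n - 1) - max 0 (x (wsucc n i) + x n - 1) := by
  simp only [triExcess, MW, M'W, max_def, min_def]
  split_ifs <;> linarith

theorem phiW_eq {U : Finset ℕ} (hU : U ⊆ Icc 1 (n - 1)) (hU1 : U ∩ U.image (wsucc n) = ∅) :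
    phiW n x U = ∑ i ∈ Icc 1 (n - 1), max 0 (x i + x (wsucc n i) - 1) +
      ∑ i ∈ Icc 1 (n - 1), max 0 (x i + x n - 1) + ∑ i ∈ U, triExcess n x i +
      ∑ i ∈ U, (max 0 (x i + x (wsucc n i) + x n - 1) - (x i + x (wsucc n i) + x n - 1)) := by
  rw [phiW, sum_sdiff_add_sum_sdiff_union_image hU
    (image_subset_iff.2 fun _ hi => wsucc_mem (hU hi)) ((wsucc_injOn n).mono (coe_subset.2 hU))
    (disjoint_iff_inter_eq_empty.2 hU1), add_assoc _ (∑ i ∈ U, triExcess n x i),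
    ← sum_add_distrib (s := U)]
  congr 1
  refine sum_congr rfl fun i _ => ?_
  rw [triExcess_eq]
  ring

theorem sum_triExcess_le {T : Finset ℕ} (hT : T ⊆ Icc 1 (n - 1))
    (hP1 : T ∩ T.image (wsucc n) = ∅) (hP2 : phiW n x T = phiStarW n x)
    (hP3 : ∀ i ∈ T, 1 ≤ x i + x (wsucc n i) + x n) :
    ∀ U ⊆ Icc 1 (n - 1), U ∩ U.image (wsucc n) = ∅ →
      ∑ i ∈ U, triExcess n x i ≤ ∑ i ∈ T, triExcess n x i := by
  intro U hU hU1
  have hle : phiW n x U ≤ phiW n x T :=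
    hP2 ▸ le_sup' (phiW n x) (mem_filter.2 ⟨mem_powerset.2 hU, hU1⟩)
  rw [phiW_eq hU hU1, phiW_eq hT hP1] at hle
  have hU0 : 0 ≤ ∑ i ∈ U,
      (max 0 (x i + x (wsucc n i) + x n - 1) - (x i + x (wsucc n i) + x n - 1)) :=
    sum_nonneg fun i _ => sub_nonneg.2 (le_max_right _ _)
  have hT0 : ∑ i ∈ T,
      (max 0 (x i + x (wsucc n i) + x n - 1) - (x i + x (wsucc n i) + x n - 1)) = 0 :=
    sum_eq_zero fun i hi => by rw [max_eq_right (by linarith [hP3 i hi]), sub_self]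
  linarith

theorem max_zero_triExcess_le_MW_sub_mW {i : ℕ} (hxi : 0 ≤ x i ∧ x i ≤ 1)
    (hxn : 0 ≤ x n ∧ x n ≤ 1) : max 0 (triExcess n x i) ≤ MW n x i - mW n x i := by
  simp only [triExcess, MW, mW, M'W, max_def, min_def]
  split_ifs <;> linarith

theorem max_zero_triExcess_le {i : ℕ} (hxi : 0 ≤ x i) (hxs : 0 ≤ x (wsucc n i))
    (hxn : 0 ≤ x n ∧ x n ≤ 1) :
    max 0 (triExcess n x i) ≤ MW n x i + MW n x (wsucc n i) - m'W n x i := by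
  simp only [triExcess, MW, M'W, m'W, max_def, min_def]
  split_ifs <;> linarith

end Wheel

theorem zSystem_feasible_general (n : ℕ) (hn : 5 ≤ n) (heven : Even (n - 1)) (x : ℕ → ℝ)
    (hx : ∀ i ∈ Finset.Icc 1 n, 0 ≤ x i ∧ x i ≤ 1)
    (T : Finset ℕ) (hT : T ⊆ Finset.Icc 1 (n - 1))
    (hP1 : T ∩ T.image (wsucc n) = ∅)
    (hP2 : phiW n x T = phiStarW n x)
    (hP3 : ∀ i ∈ T, 1 ≤ x i + x (wsucc n i) + x n ∧ x i + x (wsucc n i) + x n ≤ 2) :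
    ∃ z : ℕ → ℝ, zSystem n x T z := by
  obtain ⟨K, hK⟩ := heven
  obtain ⟨δ, hδ⟩ := exists_isRimSlack (K := K) (by omega) (by omega) hT hP1
    (sum_triExcess_le hT hP1 hP2 fun i hi => (hP3 i hi).1)
  have hxn : 0 ≤ x n ∧ x n ≤ 1 := hx n (by simp; omega)
  have hxI : ∀ i ∈ Icc 1 (n - 1), 0 ≤ x i ∧ x i ≤ 1 :=
    fun i hi => hx i (by simp only [mem_Icc] at hi ⊢; omega)
  refine ⟨fun i => MW n x i - δ i, fun i hi => ?_, fun i hi => ?_, fun i _ => ?_,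
    fun i hi => ?_, fun i hi => ?_⟩
  · have hiI : i ∈ Icc 1 (n - 1) := by
      rcases mem_union.1 hi with hi | hi
      · exact hT hi
      · obtain ⟨j, hj, rfl⟩ := mem_image.1 hi
        exact wsucc_mem (hT hj)
    linarith [hδ.le i hiI, max_zero_triExcess_le_MW_sub_mW (hxI i hiI) hxn]
  · simp [hδ.eq_zero i hi]
  · linarith [hδ.nonneg i]
  · have h := hδ.add_le i hi
    unfold triExcess at h
    dsimp only
    linarith
  · obtain ⟨hiI, -⟩ := mem_sdiff.1 hi
    have hsum := hδ.add_eq i hi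
    have hup := max_zero_triExcess_le (hxI i hiI).1 (hxI _ (wsucc_mem hiI)).1 hxn
    have hlo := le_max_right 0 (triExcess n x i)
    have htri : triExcess n x i = MW n x i + MW n x (wsucc n i) - M'W n x i := rfl
    dsimp only
    constructor <;> linarith

theorem zSystem_feasible (n : ℕ) (hn : 5 ≤ n) (heven : Even (n - 1)) (x : ℕ → ℝ)
    (hx : ∀ i ∈ Finset.Icc 1 n, 0 ≤ x i ∧ x i ≤ 1)
    (T : Finset ℕ) (hT : T ⊆ Finset.Icc 1 (n - 1))
    (hP1 : T ∩ T.image (wsucc n) = ∅)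
    (hP2 : phiW n x T = phiStarW n x)
    (hP3 : ∀ i ∈ T, 1 ≤ x i + x (wsucc n i) + x n ∧ x i + x (wsucc n i) + x n ≤ 2)
    (hP4 : ∀ i ∈ Finset.Icc 1 (n - 1),
      1 ≤ x i + x (wsucc n i) + x n → x i + x (wsucc n i) + x n ≤ 2 →
        (wpred n i ∈ T ∨ i ∈ T ∨ wsucc n i ∈ T)) :
    ∃ z : ℕ → ℝ, zSystem n x T z :=
  zSystem_feasible_general n hn heven x hx T hT hP1 hP2 hP3
end
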